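/- arXiv:2403.03913 — 5 statements merged into one kernel-verified Lean document; each statement's English description precedes it below -/
import Mathlib

section
/- Suppose the underlying graph is connected and every agent's bias vector has strictly positive entries. Then at any fixed point of the biased opinion dynamics, if some agent i has x^i_ℓ = 0 for some index ℓ, then x^j_ℓ = 0 for every agent j in the network. -/
/-- On a connected graph with strictly positive bias vectors, if some agent's
opinion is zero in index `ℓ` at a fixed point, then every agent's opinion is
zero in index `ℓ`. -/
theorem boundary_propagation {k : ℕ} {V : Type*} [Fintype V]
    (G : SimpleGraph V) [DecidableRel G.Adj] (hconn : G.Connected)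
    (r : V → Fin k → ℝ) (x : V → Fin k → ℝ)
    (hr : ∀ i l, 0 < r i l)
    (hx : ∀ i, (∀ l, 0 ≤ x i l) ∧ ∑ l, x i l = 1)
    (hfix : ∀ i, (fun l => (x i l + ∑ j ∈ G.neighborFinset i, r i l * x j l) /
        (∑ m, |x i m + ∑ j ∈ G.neighborFinset i, r i m * x j m|)) = x i)
    (i : V) (ℓ : Fin k) (hiz : x i ℓ = 0) :
    ∀ j : V, x j ℓ = 0 := by
  have key : ∀ a : V, x a ℓ = 0 → ∀ b : V, G.Adj a b → x b ℓ = 0 := by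
    intro a ha b hab
    have heq := congrFun (hfix a) ℓ
    have hsum_nonneg : ∀ m : Fin k,
        0 ≤ ∑ j ∈ G.neighborFinset a, r a m * x j m := by
      intro m
      exact Finset.sum_nonneg fun j _ => mul_nonneg (hr a m).le ((hx j).1 m)
    have hD : (1 : ℝ) ≤ ∑ m, |x a m + ∑ j ∈ G.neighborFinset a, r a m * x j m| := by
      calc (1 : ℝ) = ∑ m, x a m := (hx a).2.symm
        _ ≤ ∑ m, |x a m + ∑ j ∈ G.neighborFinset a, r a m * x j m| := by
            apply Finset.sum_le_sum
            intro m _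
            have := hsum_nonneg m
            have hle : x a m ≤ x a m + ∑ j ∈ G.neighborFinset a, r a m * x j m := by
              linarith
            exact hle.trans (le_abs_self _)
    have hDne : (∑ m, |x a m + ∑ j ∈ G.neighborFinset a, r a m * x j m|) ≠ 0 := by
      linarith
    rw [ha, div_eq_zero_iff] at heq
    have hnum : 0 + ∑ j ∈ G.neighborFinset a, r a ℓ * x j ℓ = 0 := by
      rcases heq with h | h
      · exact h
      · exact absurd h hDne
    rw [zero_add] at hnum
    have hzero := (Finset.sum_eq_zero_iff_of_nonneg
      (fun j _ => mul_nonneg (hr a ℓ).le ((hx j).1 ℓ))).mp hnum b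
      ((SimpleGraph.mem_neighborFinset G a b).mpr hab)
    rcases mul_eq_zero.mp hzero with h | h
    · exact absurd h (hr a ℓ).ne'
    · exact h
  intro j
  obtain ⟨w⟩ := hconn i j
  clear hfix
  induction w with
  | nil => exact hiz
  | cons hadj p ih => exact ih (key _ hiz _ hadj)
end

section
/- Suppose the graph is connected and all bias vectors are strictly positive, and consider a fixed point where agent i has x^i_ℓ = 0. Then every neighbor j ∈ N_i satisfies x^j_ℓ = 0 (the one-step version of the boundary propagation result). -/
/-- On a connected graph with strictly positive bias vectors, if some agent's
opinion is zero in index `ℓ` at a fixed point, then every agent's opinion is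
zero in index `ℓ`. -/
theorem boundary_propagation_one_step {k : ℕ} {V : Type*} [Fintype V]
    (G : SimpleGraph V) [DecidableRel G.Adj] (hconn : G.Connected)
    (r : V → Fin k → ℝ) (x : V → Fin k → ℝ)
    (hr : ∀ i l, 0 < r i l)
    (hx : ∀ i, (∀ l, 0 ≤ x i l) ∧ ∑ l, x i l = 1)
    (hfix : ∀ i, (fun l => (x i l + ∑ j ∈ G.neighborFinset i, r i l * x j l) /
        (∑ m, |x i m + ∑ j ∈ G.neighborFinset i, r i m * x j m|)) = x i)
    (i : V) (ℓ : Fin k) (hiz : x i ℓ = 0) :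
    ∀ j ∈ G.neighborFinset i, x j ℓ = 0 := by
  set D : ℝ := ∑ m, |x i m + ∑ j ∈ G.neighborFinset i, r i m * x j m| with hD
  have heq : ∀ l, (x i l + ∑ j ∈ G.neighborFinset i, r i l * x j l) / D = x i l := by
    intro l
    exact congrFun (hfix i) l
  have hDne : D ≠ 0 := by
    intro h0
    have : ∀ l, x i l = 0 := by
      intro l
      have := heq l
      rw [h0, div_zero] at this
      exact this.symm
    have hsum := (hx i).2
    simp [this] at hsum
  have hnum : ∑ j ∈ G.neighborFinset i, r i ℓ * x j ℓ = 0 := by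
    have := heq ℓ
    rw [hiz] at this
    have h0 := (div_eq_zero_iff.mp this).resolve_right hDne
    linarith
  have hterm : ∀ j ∈ G.neighborFinset i, r i ℓ * x j ℓ = 0 := by
    intro j hj
    refine (Finset.sum_eq_zero_iff_of_nonneg ?_).mp hnum j hj
    intro m _
    exact mul_nonneg (hr i ℓ).le ((hx m).1 ℓ)
  intro j hj
  have := hterm j hj
  rcases mul_eq_zero.mp this with h | h
  · exact absurd h (hr i ℓ).ne'
  · exact h
end

section
/- Consider the two-agent one-dimensional reduced dynamics x¹⁺ = (x¹ + α¹x²)/(1 + β¹ + (α¹−β¹)x²), x²⁺ = (x² + α²x¹)/(1 + β² + (α²−β²)x¹) with α^i, β^i > 0. If (x¹*, x²*) is a fixed point, then (α¹α² − β¹β²)·((x¹*)² − x¹*) = 0. In particular, if α¹α² ≠ β¹β², then x¹* ∈ {0, 1}. -/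
/-- Fixed points of the two-agent reduced dynamics satisfy
`(α¹α² − β¹β²)((x¹*)² − x¹*) = 0`; in particular if `α¹α² ≠ β¹β²` then
`x¹* ∈ {0, 1}`. -/
theorem two_agent_fixed_points (a1 b1 a2 b2 x1 x2 : ℝ)
    (ha1 : 0 < a1) (hb1 : 0 < b1) (ha2 : 0 < a2) (hb2 : 0 < b2)
    (hx1 : x1 ∈ Set.Icc (0 : ℝ) 1) (hx2 : x2 ∈ Set.Icc (0 : ℝ) 1)
    (hfix1 : x1 = (x1 + a1 * x2) / (1 + b1 + (a1 - b1) * x2))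
    (hfix2 : x2 = (x2 + a2 * x1) / (1 + b2 + (a2 - b2) * x1)) :
    (a1 * a2 - b1 * b2) * (x1 ^ 2 - x1) = 0 ∧
      (a1 * a2 ≠ b1 * b2 → x1 = 0 ∨ x1 = 1) := by
  obtain ⟨hx10, hx11⟩ := hx1
  obtain ⟨hx20, hx21⟩ := hx2
  have hd1 : 1 + b1 + (a1 - b1) * x2 ≠ 0 := by nlinarith
  have hd2 : 1 + b2 + (a2 - b2) * x1 ≠ 0 := by nlinarith
  rw [eq_div_iff hd1] at hfix1
  rw [eq_div_iff hd2] at hfix2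
  have key1 : b1 * x1 * (1 - x2) = a1 * x2 * (1 - x1) := by linear_combination hfix1
  have key2 : b2 * x2 * (1 - x1) = a2 * x1 * (1 - x2) := by linear_combination hfix2
  have h : x1 = 0 ∨ x1 = 1 ∨ a1 * a2 = b1 * b2 := by
    by_cases hx2z : x2 = 0
    · left
      have : b1 * x1 = 0 := by rw [hx2z] at key1; linarith
      exact (mul_eq_zero.mp this).resolve_left (ne_of_gt hb1)
    by_cases hx2o : x2 = 1
    · right; left
      have : a1 * (1 - x1) = 0 := by rw [hx2o] at key1; linarith
      have := (mul_eq_zero.mp this).resolve_left (ne_of_gt ha1)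
      linarith
    by_cases hx1z : x1 = 0
    · exact Or.inl hx1z
    by_cases hx1o : x1 = 1
    · exact Or.inr (Or.inl hx1o)
    · right; right
      have ht : x1 * x2 * (1 - x1) * (1 - x2) ≠ 0 := by
        apply mul_ne_zero; apply mul_ne_zero; apply mul_ne_zero hx1z hx2z
        · intro h; apply hx1o; linarith
        · intro h; apply hx2o; linarith
      have hz : (b1 * b2 - a1 * a2) * (x1 * x2 * (1 - x1) * (1 - x2)) = 0 := by
        linear_combination (b2 * x2 * (1 - x1)) * key1 + (a1 * x2 * (1 - x1)) * key2
      have := (mul_eq_zero.mp hz).resolve_right ht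
      linarith
  constructor
  · rcases h with h | h | h <;> rw [h] <;> ring
  · intro hne
    rcases h with h | h | h
    · exact Or.inl h
    · exact Or.inr h
    · exact absurd h hne
end

section
/- For the two-agent reduced dynamics with α¹, β¹, α², β² > 0, both (0,0) and (1,1) are fixed points. The Jacobian at (0,0) is [[1/(1+β¹), α¹/(1+β¹)], [α²/(1+β²), 1/(1+β²)]], and this matrix has spectral radius less than 1 if and only if α¹α² < β¹β². -/
set_option maxHeartbeats 1000000 in
/-- For the two-agent reduced dynamics with positive parameters, `(0,0)` and
`(1,1)` are fixed points; the Jacobian of the dynamics at `(0,0)` is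
`[[1/(1+β¹), α¹/(1+β¹)], [α²/(1+β²), 1/(1+β²)]]`; and this matrix is Schur
stable (all complex eigenvalues of modulus < 1) iff `α¹α² < β¹β²`. -/
theorem two_agent_jacobian (a1 b1 a2 b2 : ℝ)
    (ha1 : 0 < a1) (hb1 : 0 < b1) (ha2 : 0 < a2) (hb2 : 0 < b2)
    (F : (Fin 2 → ℝ) → (Fin 2 → ℝ))
    (hF : F = fun v => ![(v 0 + a1 * v 1) / (1 + b1 + (a1 - b1) * v 1),
                         (v 1 + a2 * v 0) / (1 + b2 + (a2 - b2) * v 0)])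
    (J : Matrix (Fin 2) (Fin 2) ℝ)
    (hJ : J = !![1 / (1 + b1), a1 / (1 + b1); a2 / (1 + b2), 1 / (1 + b2)]) :
    F ![0, 0] = ![0, 0] ∧ F ![1, 1] = ![1, 1] ∧
      HasFDerivAt F (J.mulVecLin.toContinuousLinearMap) ![0, 0] ∧
      ((∀ z ∈ spectrum ℂ (J.map (Complex.ofReal)), ‖z‖ < 1) ↔
        a1 * a2 < b1 * b2) := by
  have hA : (0:ℝ) < 1 + b1 := by linarith
  have hB : (0:ℝ) < 1 + b2 := by linarith
  refine ⟨?_, ?_, ?_, ?_⟩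
  · funext i
    fin_cases i <;> simp [hF]
  · funext i
    fin_cases i <;> (simp [hF]; intro h; linarith)
  · -- derivative
    apply hasFDerivAt_pi''
    intro i
    fin_cases i
    · show HasFDerivAt (fun x => F x 0)
        ((ContinuousLinearMap.proj 0).comp (J.mulVecLin.toContinuousLinearMap)) ![0,0]
      have hnum : HasFDerivAt (fun v : Fin 2 → ℝ => v 0 + a1 * v 1)
          ((ContinuousLinearMap.proj 0 : (Fin 2 → ℝ) →L[ℝ] ℝ)
            + a1 • ContinuousLinearMap.proj 1) ![0, 0] :=
        (hasFDerivAt_apply (𝕜 := ℝ) (0 : Fin 2) (![0,0] : Fin 2 → ℝ)).add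
          ((hasFDerivAt_apply (𝕜 := ℝ) (1 : Fin 2) (![0,0] : Fin 2 → ℝ)).const_mul a1)
      have hden : HasFDerivAt (fun v : Fin 2 → ℝ => 1 + b1 + (a1 - b1) * v 1)
          ((a1 - b1) • (ContinuousLinearMap.proj 1 : (Fin 2 → ℝ) →L[ℝ] ℝ)) ![0, 0] := by
        have hfn : (fun v : Fin 2 → ℝ => 1 + b1 + (a1 - b1) * v 1)
            = fun v => (1 + b1) + ((a1 - b1) • (ContinuousLinearMap.proj 1 : (Fin 2 → ℝ) →L[ℝ] ℝ)) v := by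
          funext v; simp [mul_comm]
        rw [hfn]
        simpa using (((a1 - b1) • (ContinuousLinearMap.proj 1 : (Fin 2 → ℝ) →L[ℝ] ℝ)).hasFDerivAt
          (x := (![0,0] : Fin 2 → ℝ))).const_add (1 + b1)
      have hd0 : (fun v : Fin 2 → ℝ => 1 + b1 + (a1 - b1) * v 1) ![0,0] ≠ 0 := by
        simp; nlinarith
      have hinv := (hasFDerivAt_inv hd0).comp (![0,0] : Fin 2 → ℝ) hden
      have hmul := hnum.mul hinv
      have heq : (fun v : Fin 2 → ℝ => (v 0 + a1 * v 1) / (1 + b1 + (a1 - b1) * v 1))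
          = fun v : Fin 2 → ℝ => (v 0 + a1 * v 1) * (1 + b1 + (a1 - b1) * v 1)⁻¹ := by
        funext v; rw [div_eq_mul_inv]
      have hF0 : (fun x : Fin 2 → ℝ => F x 0)
          = fun v : Fin 2 → ℝ => (v 0 + a1 * v 1) * (1 + b1 + (a1 - b1) * v 1)⁻¹ := by
        rw [hF]; funext v; simp [div_eq_mul_inv]
      rw [hF0]
      refine hmul.congr_fderiv ?_
      apply ContinuousLinearMap.ext
      intro v
      simp [hJ, Matrix.mulVec, dotProduct, Fin.sum_univ_two, div_eq_mul_inv]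
      field_simp
      try ring
    · show HasFDerivAt (fun x => F x 1)
        ((ContinuousLinearMap.proj 1).comp (J.mulVecLin.toContinuousLinearMap)) ![0,0]
      have hnum : HasFDerivAt (fun v : Fin 2 → ℝ => v 1 + a2 * v 0)
          ((ContinuousLinearMap.proj 1 : (Fin 2 → ℝ) →L[ℝ] ℝ)
            + a2 • ContinuousLinearMap.proj 0) ![0, 0] :=
        (hasFDerivAt_apply (𝕜 := ℝ) (1 : Fin 2) (![0,0] : Fin 2 → ℝ)).add
          ((hasFDerivAt_apply (𝕜 := ℝ) (0 : Fin 2) (![0,0] : Fin 2 → ℝ)).const_mul a2)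
      have hden : HasFDerivAt (fun v : Fin 2 → ℝ => 1 + b2 + (a2 - b2) * v 0)
          ((a2 - b2) • (ContinuousLinearMap.proj 0 : (Fin 2 → ℝ) →L[ℝ] ℝ)) ![0, 0] := by
        have hfn : (fun v : Fin 2 → ℝ => 1 + b2 + (a2 - b2) * v 0)
            = fun v => (1 + b2) + ((a2 - b2) • (ContinuousLinearMap.proj 0 : (Fin 2 → ℝ) →L[ℝ] ℝ)) v := by
          funext v; simp [mul_comm]
        rw [hfn]
        simpa using (((a2 - b2) • (ContinuousLinearMap.proj 0 : (Fin 2 → ℝ) →L[ℝ] ℝ)).hasFDerivAt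
          (x := (![0,0] : Fin 2 → ℝ))).const_add (1 + b2)
      have hd0 : (fun v : Fin 2 → ℝ => 1 + b2 + (a2 - b2) * v 0) ![0,0] ≠ 0 := by
        simp; nlinarith
      have hinv := (hasFDerivAt_inv hd0).comp (![0,0] : Fin 2 → ℝ) hden
      have hmul := hnum.mul hinv
      have hF1 : (fun x : Fin 2 → ℝ => F x 1)
          = fun v : Fin 2 → ℝ => (v 1 + a2 * v 0) * (1 + b2 + (a2 - b2) * v 0)⁻¹ := by
        rw [hF]; funext v; simp [div_eq_mul_inv]
      rw [hF1]
      refine hmul.congr_fderiv ?_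
      apply ContinuousLinearMap.ext
      intro v
      simp [hJ, Matrix.mulVec, dotProduct, Fin.sum_univ_two, div_eq_mul_inv]
      field_simp
      try ring
  · -- spectrum
    set p : ℝ := 1 / (1 + b1) with hp
    set q : ℝ := a1 / (1 + b1) with hq
    set r : ℝ := a2 / (1 + b2) with hr
    set s : ℝ := 1 / (1 + b2) with hs
    have hp0 : 0 < p := by positivity
    have hs0 : 0 < s := by positivity
    have hq0 : 0 < q := by positivity
    have hr0 : 0 < r := by positivity
    have hp1 : p < 1 := by rw [hp]; rw [div_lt_one hA]; linarith
    have hs1 : s < 1 := by rw [hs]; rw [div_lt_one hB]; linarith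
    set D : ℝ := (p - s) ^ 2 + 4 * (q * r) with hD
    have hD0 : 0 < D := by positivity
    have hsq : Real.sqrt D ^ 2 = D := Real.sq_sqrt hD0.le
    have hsqrt0 : 0 < Real.sqrt D := Real.sqrt_pos.2 hD0
    set l1 : ℝ := (p + s + Real.sqrt D) / 2 with hl1
    set l2 : ℝ := (p + s - Real.sqrt D) / 2 with hl2
    have hprod : l1 * l2 = p * s - q * r := by
      rw [hl1, hl2]; linear_combination (-(1:ℝ)/4) * hsq
    have hsum : l1 + l2 = p + s := by rw [hl1, hl2]; ring
    clear_value p q r s D l1 l2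
    -- spectrum characterization
    have hspec : ∀ z : ℂ, z ∈ spectrum ℂ (J.map Complex.ofReal) ↔ z = l1 ∨ z = l2 := by
      intro z
      rw [spectrum.mem_iff, Matrix.isUnit_iff_isUnit_det, isUnit_iff_ne_zero, not_ne_iff]
      have halg : (algebraMap ℂ (Matrix (Fin 2) (Fin 2) ℂ)) z = Matrix.scalar (Fin 2) z := rfl
      rw [halg, Matrix.det_fin_two]
      have h00 : (J.map Complex.ofReal) 0 0 = (p:ℂ) := by simp [hJ, hp]
      have h01 : (J.map Complex.ofReal) 0 1 = (q:ℂ) := by simp [hJ, hq]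
      have h10 : (J.map Complex.ofReal) 1 0 = (r:ℂ) := by simp [hJ, hr]
      have h11 : (J.map Complex.ofReal) 1 1 = (s:ℂ) := by simp [hJ, hs]
      simp only [Matrix.sub_apply, Matrix.scalar_apply, Matrix.diagonal_apply,
        h00, h01, h10, h11]
      norm_num
      have key : (z - (p:ℂ)) * (z - (s:ℂ)) - (q:ℂ) * (r:ℂ) = (z - (l1:ℂ)) * (z - (l2:ℂ)) := by
        have hprodC : (l1:ℂ) * (l2:ℂ) = (p:ℂ) * (s:ℂ) - (q:ℂ) * (r:ℂ) := by
          rw [← Complex.ofReal_mul, hprod]; push_cast; ring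
        have hsumC : (l1:ℂ) + (l2:ℂ) = (p:ℂ) + (s:ℂ) := by
          rw [← Complex.ofReal_add, hsum]; push_cast; ring
        linear_combination z * hsumC - hprodC
      constructor
      · intro h
        have : (z - (l1:ℂ)) * (z - (l2:ℂ)) = 0 := by rw [← key]; linear_combination h
        rcases mul_eq_zero.1 this with h' | h'
        · exact Or.inl (by linear_combination h')
        · exact Or.inr (by linear_combination h')
      · rintro (rfl | rfl)
        · have : ((l1:ℂ) - (l1:ℂ)) * ((l1:ℂ) - (l2:ℂ)) = 0 := by ring
          rw [← key] at this; linear_combination this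
        · have : ((l2:ℂ) - (l1:ℂ)) * ((l2:ℂ) - (l2:ℂ)) = 0 := by ring
          rw [← key] at this; linear_combination this
    have hqr : q * r < (1 - p) * (1 - s) ↔ a1 * a2 < b1 * b2 := by
      rw [hq, hr, hp, hs]
      rw [div_mul_div_comm]
      have h1 : (1:ℝ) - 1 / (1 + b1) = b1 / (1 + b1) := by field_simp; ring
      have h2 : (1:ℝ) - 1 / (1 + b2) = b2 / (1 + b2) := by field_simp; ring
      rw [h1, h2, div_mul_div_comm]
      exact div_lt_div_iff_of_pos_right (show (0:ℝ) < (1+b1)*(1+b2) by positivity)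
    constructor
    · intro h
      have hl1mem : (l1:ℂ) ∈ spectrum ℂ (J.map Complex.ofReal) := (hspec _).2 (Or.inl rfl)
      have := h _ hl1mem
      rw [Complex.norm_real] at this
      have hl1lt : l1 < 1 := lt_of_le_of_lt (le_abs_self l1) this
      have hsqlt : Real.sqrt D < 2 - p - s := by rw [hl1] at hl1lt; linarith
      have hDlt : D < (2 - p - s) ^ 2 := by
        have h2 : (0:ℝ) < 2 - p - s := lt_of_lt_of_le hsqrt0 hsqlt.le
        nlinarith [hsq, Real.sqrt_nonneg D]
      rw [← hqr]
      nlinarith [hDlt]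
    · intro h z hz
      rw [← hqr] at h
      have hDlt : D < (2 - p - s) ^ 2 := by nlinarith
      have h2ps : (0:ℝ) < 2 - p - s := by nlinarith
      have hsqlt : Real.sqrt D < 2 - p - s := (Real.sqrt_lt' h2ps).2 hDlt
      have hl1lt : l1 < 1 := by rw [hl1]; linarith
      have hl1pos : 0 < l1 := by rw [hl1]; linarith
      have hl2lt : |l2| < 1 := by
        rw [abs_lt, hl2]; constructor <;> nlinarith
      rcases (hspec z).1 hz with rfl | rfl
      · simpa [Complex.norm_real] using abs_lt.2 ⟨by nlinarith, hl1lt⟩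
      · simpa [Complex.norm_real] using hl2lt
end

section
/- In the two-agent reduced dynamics, if α¹α² = β¹β² (with all parameters positive), then every pair (x¹*, x²*) ∈ [0,1]² satisfying x¹* = α¹x²*/(α¹x²* + β¹(1−x²*)) is a fixed point of the system; in particular the system admits infinitely many fixed points (a continuum parametrized by x²* ∈ [0,1]). -/
/-- If `α¹α² = β¹β²` with all parameters positive, then for every
`x²* ∈ [0,1]`, the pair `(x¹*, x²*)` with
`x¹* = α¹x²*/(α¹x²* + β¹(1−x²*))` is a fixed point of the two-agent reduced
dynamics; in particular the set of fixed points in `[0,1]²` is infinite. -/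
theorem two_agent_continuum (a1 b1 a2 b2 : ℝ)
    (ha1 : 0 < a1) (hb1 : 0 < b1) (ha2 : 0 < a2) (hb2 : 0 < b2)
    (heq : a1 * a2 = b1 * b2) :
    (∀ x2 ∈ Set.Icc (0 : ℝ) 1,
      ∀ x1, x1 = a1 * x2 / (a1 * x2 + b1 * (1 - x2)) →
        (x1 + a1 * x2) / (1 + b1 + (a1 - b1) * x2) = x1 ∧
        (x2 + a2 * x1) / (1 + b2 + (a2 - b2) * x1) = x2) ∧
    {p : ℝ × ℝ | p.1 ∈ Set.Icc (0 : ℝ) 1 ∧ p.2 ∈ Set.Icc (0 : ℝ) 1 ∧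
        (p.1 + a1 * p.2) / (1 + b1 + (a1 - b1) * p.2) = p.1 ∧
        (p.2 + a2 * p.1) / (1 + b2 + (a2 - b2) * p.1) = p.2}.Infinite := by
  have hpos : ∀ a b x : ℝ, 0 < a → 0 < b → 0 ≤ x → x ≤ 1 → 0 < a * x + b * (1 - x) := by
    intro a b x ha hb h0 h1
    rcases h0.eq_or_lt with h | h
    · rw [← h]; norm_num; exact hb
    · nlinarith [mul_pos ha h, mul_nonneg hb.le (sub_nonneg.mpr h1)]
  have key : ∀ x2 ∈ Set.Icc (0 : ℝ) 1,
      ∀ x1, x1 = a1 * x2 / (a1 * x2 + b1 * (1 - x2)) →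
        (x1 + a1 * x2) / (1 + b1 + (a1 - b1) * x2) = x1 ∧
        (x2 + a2 * x1) / (1 + b2 + (a2 - b2) * x1) = x2 := by
    rintro x2 ⟨h0, h1⟩ x1 hx1
    have hD : 0 < a1 * x2 + b1 * (1 - x2) := hpos a1 b1 x2 ha1 hb1 h0 h1
    have hx1' : x1 * (a1 * x2 + b1 * (1 - x2)) = a1 * x2 := by
      rw [hx1]; field_simp
    have hx1nn : 0 ≤ x1 := by
      rw [hx1]; exact div_nonneg (by nlinarith) hD.le
    have hx1le : x1 ≤ 1 := by
      rw [hx1, div_le_one hD]; nlinarith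
    have hd1 : 0 < 1 + b1 + (a1 - b1) * x2 := by nlinarith
    have hd2 : 0 < 1 + b2 + (a2 - b2) * x1 := by nlinarith
    constructor
    · rw [div_eq_iff hd1.ne']
      linear_combination -hx1'
    · rw [div_eq_iff hd2.ne']
      have h : (x2 + a2 * x1) * (a1 * x2 + b1 * (1 - x2)) =
          (x2 * (1 + b2 + (a2 - b2) * x1)) * (a1 * x2 + b1 * (1 - x2)) := by
        linear_combination (a2 - x2 * (a2 - b2)) * hx1' + x2 * (1 - x2) * heq
      exact mul_right_cancel₀ hD.ne' h
  refine ⟨key, ?_⟩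
  have hinj : Set.InjOn (fun t : ℝ => (a1 * t / (a1 * t + b1 * (1 - t)), t))
      (Set.Icc 0 1) := fun x _ y _ h => congrArg Prod.snd h
  have himg : ((fun t : ℝ => (a1 * t / (a1 * t + b1 * (1 - t)), t)) '' Set.Icc 0 1).Infinite :=
    ((Set.infinite_image_iff hinj).mpr (Set.Icc_infinite one_pos))
  refine himg.mono ?_
  rintro p ⟨t, ht, rfl⟩
  obtain ⟨ht0, ht1⟩ := ht
  have hD : 0 < a1 * t + b1 * (1 - t) := hpos a1 b1 t ha1 hb1 ht0 ht1
  have hmem : a1 * t / (a1 * t + b1 * (1 - t)) ∈ Set.Icc (0 : ℝ) 1 := by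
    constructor
    · exact div_nonneg (by nlinarith) hD.le
    · rw [div_le_one hD]; nlinarith
  obtain ⟨e1, e2⟩ := key t ⟨ht0, ht1⟩ _ rfl
  exact ⟨hmem, ⟨ht0, ht1⟩, e1, e2⟩
end
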